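/- arXiv:2201.10646 — 8 statements merged into one kernel-verified Lean document; each statement's English description precedes it below -/
import Mathlib

section
/- If M ≥ 1.5, N/K ≤ M ≤ N/(2G), and s₀ = N/(2GM) satisfies 0 ≤ s₀ ≤ min(K,N)/G, then G·s₀ − G·s₀·M/(N/(G·s₀) − 1) ≥ N·(M−1)/(2M·(2M−1)). -/
/-- Substituting `s₀ = N/(2 G M)` into the loosened cut-set bound expression
yields at least `N (M−1) / (2M(2M−1))`. -/
theorem cut_set_at_s0 (K G N M : ℝ) (hK : 0 < K) (hG : 0 < G) (hN : 0 < N)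
    (hGK : G ≤ K) (hM : (1.5 : ℝ) ≤ M) (hMl : N / K ≤ M) (hMu : M ≤ N / (2 * G))
    (s₀ : ℝ) (hs₀ : s₀ = N / (2 * G * M))
    (hs₀0 : 0 ≤ s₀) (hs₀1 : s₀ ≤ min K N / G) :
    G * s₀ - G * s₀ * M / (N / (G * s₀) - 1) ≥ N * (M - 1) / (2 * M * (2 * M - 1)) := by
  have hM0 : (0:ℝ) < M := by linarith
  have h2M1 : (0:ℝ) < 2 * M - 1 := by linarith
  subst hs₀
  have hGs : G * (N / (2 * G * M)) = N / (2 * M) := by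
    field_simp
  rw [hGs]
  have hNd : N / (N / (2 * M)) = 2 * M := by
    rw [div_div_eq_mul_div]; field_simp
  rw [hNd]
  have : N / (2 * M) - N / (2 * M) * M / (2 * M - 1) = N * (M - 1) / (2 * M * (2 * M - 1)) := by
    field_simp; ring
  rw [this]
end

section
/- If M ≥ 1.5 and N/K ≤ M ≤ N/(2G), then the ratio ((K−KM/N)/(KM/N + 1)) / (N(M−1)/(2M(2M−1))) ≤ 8. That is, (N−M)/N · 4KM/(KM+N) · (M−1/2)/(M−1) ≤ 8. -/
/-- Scheme 1 peak rate is within a factor 8 of the bound `N(M−1)/(2M(2M−1))`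
when `M ≥ 1.5` and `N/K ≤ M ≤ N/(2G)`. -/
theorem scheme1_factor8_largeM (K G N M : ℝ) (hK : 0 < K) (hG : 0 < G) (hN : 0 < N)
    (hGK : G ≤ K) (hM : (1.5 : ℝ) ≤ M) (hMl : N / K ≤ M) (hMu : M ≤ N / (2 * G)) :
    (K - K * M / N) / (K * M / N + 1) ≤ 8 * (N * (M - 1) / (2 * M * (2 * M - 1))) := by
  have hM0 : 0 < M := by linarith
  have hNKM : N ≤ K * M := by
    have := (div_le_iff₀ hK).mp hMl
    linarith
  have ht : (1:ℝ) ≤ K * M / N := (le_div_iff₀ hN).mpr (by linarith)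
  have ht0 : 0 < K * M / N := by linarith
  have h1 : (K - K * M / N) / (K * M / N + 1) ≤ K / (K * M / N) := by
    apply div_le_div₀ hK.le (by linarith) ht0 (by linarith)
  have h2 : K / (K * M / N) = N / M := by
    field_simp
  have h3 : N / M ≤ 8 * (N * (M - 1) / (2 * M * (2 * M - 1))) := by
    have hd : (0:ℝ) < 2 * M * (2 * M - 1) := by nlinarith
    rw [show 8 * (N * (M - 1) / (2 * M * (2 * M - 1)))
        = (8 * N * (M - 1)) / (2 * M * (2 * M - 1)) from by ring,
      div_le_div_iff₀ hM0 hd]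
    nlinarith [mul_nonneg (mul_nonneg hN.le hM0.le) (by linarith : (0:ℝ) ≤ 2 * M - 3)]
  linarith [h2 ▸ h1]
end

section
/- Theorem (gap to optimality for Scheme 1): For the heterogeneous-profile coded caching system with K users, N = N_c + G·N_u files, and per-user cache M satisfying N/K ≤ M ≤ N/(2G), the peak rate of Scheme 1, R_peak^(1) = (K − KM/N)/(KM/N + 1), is at most 8 times the cut-set lower bound R*(M) ≥ max_{0 ≤ s ≤ min(K,N)/G} (Gs − GsM/(N/(Gs) − 1)). -/
/-- Gap to optimality of Scheme 1: if `R` satisfies the loosened cut-set lower bound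
for every admissible real `s`, then the Scheme 1 peak rate `(K − KM/N)/(KM/N + 1)`
is at most `8 R`. -/
theorem scheme1_gap_to_optimality (K G N Nc Nu M R : ℝ)
    (hK : 0 < K) (hG : 0 < G) (hNc : 0 < Nc) (hNu : 0 < Nu)
    (hN : N = Nc + G * Nu) (hGK : G ≤ K) (hKN : K ≤ N)
    (hM : 0 < M) (hMl : N / K ≤ M) (hMu : M ≤ N / (2 * G))
    (hR : ∀ s : ℝ, 0 ≤ s → s ≤ min K N / G → N / (G * s) > 1 →
      R ≥ G * s - G * s * M / (N / (G * s) - 1)) :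
    (K - K * M / N) / (K * M / N + 1) ≤ 8 * R := by
  have hNpos : 0 < N := by nlinarith
  have hKM : N ≤ K * M := by
    rw [div_le_iff₀ hK] at hMl; linarith [hMl]
  have hM1 : 1 ≤ M := by
    rw [div_le_iff₀ hK] at hMl; nlinarith
  have h41 : (0:ℝ) < 4 * M - 1 := by linarith
  set s : ℝ := N / (4 * M * G) with hs
  have hspos : 0 < s := by positivity
  have hGs : G * s = N / (4 * M) := by
    rw [hs]; field_simp
  have h4 : N / (G * s) = 4 * M := by
    rw [hGs, div_div_eq_mul_div, mul_comm N (4 * M), mul_div_assoc, div_self hNpos.ne', mul_one]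
  have h1 : s ≤ min K N / G := by
    rw [min_eq_left hKN, hs, div_le_div_iff₀ (by positivity) hG]
    nlinarith
  have h2 : N / (G * s) > 1 := by rw [h4]; linarith
  have hR' := hR s hspos.le h1 h2
  rw [h4, hGs] at hR'
  have hB : N / (4 * M) * M / (4 * M - 1) = N / (4 * (4 * M - 1)) := by
    field_simp
  rw [hB] at hR'
  -- hR' : R ≥ N/(4M) - N/(4(4M-1))
  have t1 : N / (4 * M) ≤ R + N / (4 * (4 * M - 1)) := by linarith
  have t2 : N ≤ (R + N / (4 * (4 * M - 1))) * (4 * M) := by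
    rw [← div_le_iff₀ (by positivity : (0:ℝ) < 4 * M)]; exact t1
  have t3 : N / (4 * (4 * M - 1)) * (4 * M) = N * M / (4 * M - 1) := by
    field_simp
  rw [add_mul, t3] at t2
  have t4 : N * M / (4 * M - 1) ≤ N / 3 := by
    rw [div_le_div_iff₀ h41 (by norm_num : (0:ℝ) < 3)]
    nlinarith
  have hNle : N ≤ 6 * M * R := by nlinarith
  have hR0 : 0 ≤ R := by nlinarith
  have hNM : N / M ≤ 8 * R := by
    rw [div_le_iff₀ hM]; nlinarith
  have hd : (0:ℝ) < K * M / N + 1 := by positivity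
  have hLHS : (K - K * M / N) / (K * M / N + 1) ≤ N / M := by
    rw [div_le_iff₀ hd]
    have he : N / M * (K * M / N + 1) = K + N / M := by field_simp
    rw [he]
    have h01 : 0 ≤ K * M / N := by positivity
    have h02 : 0 ≤ N / M := by positivity
    linarith
  linarith
end

section
/- Theorem (gap to optimality for Scheme 3): With G(N_c+N_u)/K ≤ M ≤ N/(2G) and N = N_c + G·N_u, the peak rate of Scheme 3, R_peak^(3) = G·(K/G − t₃)/(t₃ + 1) with t₃ = (K/G)·M/(N_c+N_u), is at most 8·(K/G) times the loosened cut-set lower bound max_{0 ≤ s ≤ min(K,N)/G}(Gs − GsM/(N/(Gs) − 1)). -/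
/-- Gap to optimality of Scheme 3: its peak rate `G (K/G − t₃)/(t₃ + 1)` with
`t₃ = (K/G) M/(Nc+Nu)` is at most `8 (K/G)` times the loosened cut-set lower bound. -/
theorem scheme3_gap_to_optimality (K G N Nc Nu M R t₃ : ℝ)
    (hK : 0 < K) (hG : 0 < G) (hNc : 0 < Nc) (hNu : 0 < Nu)
    (hN : N = Nc + G * Nu) (hGK : G ≤ K) (hKN : K ≤ N)
    (hM : 0 < M) (hMl : G * (Nc + Nu) / K ≤ M) (hMu : M ≤ N / (2 * G))
    (ht₃ : t₃ = (K / G) * M / (Nc + Nu))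
    (hR : ∀ s : ℝ, 0 ≤ s → s ≤ min K N / G → N / (G * s) > 1 →
      R ≥ G * s - G * s * M / (N / (G * s) - 1)) :
    G * ((K / G - t₃) / (t₃ + 1)) ≤ 8 * (K / G) * R := by
  have hNG : G ≤ N := hGK.trans hKN
  have hN0 : 0 < N := lt_of_lt_of_le hG hNG
  have hk : (0:ℝ) < K / G := by positivity
  have hk1 : (1:ℝ) ≤ K / G := (le_div_iff₀ hG).mpr (by linarith)
  have hMu' : M * (2 * G) ≤ N := (le_div_iff₀ (by positivity)).mp hMu
  have hmin : min K N = K := min_eq_left hKN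
  have hs2 : N / (G * (1/2 : ℝ)) > 1 := by
    rw [gt_iff_lt, lt_div_iff₀ (by positivity)]
    nlinarith
  have hR' := hR (1/2) (by norm_num) (by rw [hmin]; linarith [hk1]) hs2
  have hD : (0:ℝ) < N / (G * (1/2)) - 1 := by linarith
  have hge : 2 * M + 1 ≤ N / (G * (1/2 : ℝ)) := by
    rw [le_div_iff₀ (by positivity : (0:ℝ) < G * (1/2))]
    nlinarith
  have hX : G * (1/2) * M / (N / (G * (1/2)) - 1) ≤ G / 4 := by
    have h2M : (0:ℝ) < 2 * M := by linarith
    calc G * (1/2) * M / (N / (G * (1/2)) - 1) ≤ G * (1/2) * M / (2 * M) := by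
          gcongr
          linarith
      _ = G / 4 := by field_simp; ring
  have hRge : G / 4 ≤ R := by linarith
  have ht1 : (1:ℝ) ≤ t₃ := by
    rw [ht₃, le_div_iff₀ (by positivity : (0:ℝ) < Nc + Nu)]
    have h1 := mul_le_mul_of_nonneg_left hMl (le_of_lt hk)
    have heq : K / G * (G * (Nc + Nu) / K) = Nc + Nu := by field_simp
    nlinarith
  have hfrac : (K / G - t₃) / (t₃ + 1) ≤ (K / G) / 2 := by
    rw [div_le_div_iff₀ (by linarith) (by norm_num)]
    nlinarith
  nlinarith [mul_le_mul_of_nonneg_left hfrac hG.le,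
    mul_le_mul_of_nonneg_left hRge (by positivity : (0:ℝ) ≤ 8 * (K / G)),
    mul_pos hk hG]
end

section
/- For integers 0 ≤ α₂ < α₁ ≤ K/G and integer t_u ≥ 0 with t_u ≤ K/G − α₁, the inequality C(K/G − α₂ − 1, t_u) ≥ C(K/G − α₁, t_u) holds; consequently, defining R_u(α) = (C(K/G, t_u+1) − C(K/G − α, t_u+1))/C(K/G, t_u), one has R_u(α₂+1) − R_u(α₂) ≥ R_u(α₁) − R_u(α₁−1). -/
/-- Submodularity of the unique-file delivery rate: with `n = K/G` users per class and
`R_u(α) = (C(n, t+1) − C(n−α, t+1))/C(n, t)`, for `0 ≤ α₂ < α₁ ≤ n` and `t ≤ n − α₁`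
one has `C(n − α₂ − 1, t) ≥ C(n − α₁, t)` and hence
`R_u(α₂+1) − R_u(α₂) ≥ R_u(α₁) − R_u(α₁−1)`. -/
theorem unique_rate_submodular (n α₁ α₂ t : ℕ)
    (h₂₁ : α₂ < α₁) (h₁n : α₁ ≤ n) (ht : t ≤ n - α₁) :
    (n - α₁).choose t ≤ (n - α₂ - 1).choose t ∧
    (let Ru : ℕ → ℚ := fun α =>
        ((n.choose (t + 1) : ℚ) - ((n - α).choose (t + 1) : ℚ)) / (n.choose t : ℚ)
     Ru α₁ - Ru (α₁ - 1) ≤ Ru (α₂ + 1) - Ru α₂) := by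
  have hmono : (n - α₁).choose t ≤ (n - α₂ - 1).choose t :=
    Nat.choose_le_choose t (by omega)
  refine ⟨hmono, ?_⟩
  intro Ru
  have hc : 0 < (n.choose t : ℚ) := by
    exact_mod_cast Nat.choose_pos (by omega)
  have e1 : n - (α₁ - 1) = (n - α₁) + 1 := by omega
  have e2 : n - (α₂ + 1) = n - α₂ - 1 := by omega
  have e3 : n - α₂ = (n - α₂ - 1) + 1 := by omega
  have pascal : ∀ m : ℕ, ((m + 1).choose (t + 1) : ℚ) - (m.choose (t + 1) : ℚ)
      = (m.choose t : ℚ) := by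
    intro m
    rw [Nat.choose_succ_succ]
    push_cast
    ring
  have d1 : Ru α₁ - Ru (α₁ - 1) = ((n - α₁).choose t : ℚ) / (n.choose t : ℚ) := by
    simp only [Ru, e1]
    rw [div_sub_div_same]
    rw [show ((n.choose (t+1) : ℚ) - ((n - α₁).choose (t+1) : ℚ))
        - ((n.choose (t+1) : ℚ) - (((n - α₁) + 1).choose (t+1) : ℚ))
        = (((n - α₁) + 1).choose (t+1) : ℚ) - ((n - α₁).choose (t+1) : ℚ) by ring]
    rw [pascal]
  have e3' : n - α₂ = (n - (α₂ + 1)) + 1 := by omega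
  have d2 : Ru (α₂ + 1) - Ru α₂ = ((n - (α₂ + 1)).choose t : ℚ) / (n.choose t : ℚ) := by
    simp only [Ru, e3']
    rw [div_sub_div_same]
    rw [show ((n.choose (t+1) : ℚ) - ((n - (α₂ + 1)).choose (t+1) : ℚ))
        - ((n.choose (t+1) : ℚ) - (((n - (α₂ + 1)) + 1).choose (t+1) : ℚ))
        = (((n - (α₂ + 1)) + 1).choose (t+1) : ℚ) - ((n - (α₂ + 1)).choose (t+1) : ℚ) by ring]
    rw [pascal]
  rw [d1, d2]
  gcongr
  have : n - (α₂ + 1) = n - α₂ - 1 := by omega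
  omega
end

section
/- Theorem (Scheme 2 beats Scheme 3 for large caches): If M ≥ (G/(G−1))·((K+1)/K)·N_u with G ≥ 2, then K·(N_u + N_c − M)/(K·(M − N_u) + N_c) ≤ K·G·(N_c + N_u − M)/(K·M + G·(N_c + N_u)). -/
/-- Scheme 2 beats Scheme 3 for large caches: if `M ≥ (G/(G−1))((K+1)/K) Nu`
(with `G ≥ 2`), then the Scheme 2 peak-rate upper bound is at most `R_peak^(3)`. -/
theorem scheme2_le_scheme3 (K G Nc Nu M : ℝ)
    (hK : 0 < K) (hG : 2 ≤ G) (hNc : 0 < Nc) (hNu : 0 < Nu)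
    (hMl : Nu < M) (hMu : M ≤ Nc + Nu)
    (hM : M ≥ (G / (G - 1)) * ((K + 1) / K) * Nu) :
    K * (Nu + Nc - M) / (K * (M - Nu) + Nc) ≤
      K * G * (Nc + Nu - M) / (K * M + G * (Nc + Nu)) := by
  have hG1 : (0:ℝ) < G - 1 := by linarith
  have hM' : G * (K + 1) * Nu ≤ M * ((G - 1) * K) := by
    rw [ge_iff_le, div_mul_div_comm, div_mul_eq_mul_div,
      div_le_iff₀ (by positivity)] at hM
    nlinarith [hM]
  have hd1 : 0 < K * (M - Nu) + Nc := by nlinarith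
  have hd2 : 0 < K * M + G * (Nc + Nu) := by nlinarith
  rw [div_le_div_iff₀ hd1 hd2]
  nlinarith [mul_nonneg (sub_nonneg.2 hMu) (sub_nonneg.2 hM'), hK.le, hNc.le]
end

section
/- Theorem (Scheme 2 beats Scheme 1 for large caches): If M ≥ N_c/G + N_u, then K·(N_u + N_c − M)/(K·(M − N_u) + N_c) ≤ (K − KM/(N_c + G·N_u))/(KM/(N_c + G·N_u) + 1). -/
/-- Scheme 2 beats Scheme 1 for large caches: if `M ≥ Nc/G + Nu`, then the Scheme 2
peak-rate upper bound is at most `R_peak^(1)`. -/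
theorem scheme2_le_scheme1 (K G Nc Nu M : ℝ)
    (hK : 0 < K) (hG : 1 ≤ G) (hNc : 0 < Nc) (hNu : 0 < Nu)
    (hMl : Nu < M) (hMu : M ≤ Nc + Nu)
    (hM : M ≥ Nc / G + Nu) :
    K * (Nu + Nc - M) / (K * (M - Nu) + Nc) ≤
      (K - K * M / (Nc + G * Nu)) / (K * M / (Nc + G * Nu) + 1) := by
  have hG0 : (0:ℝ) < G := lt_of_lt_of_le one_pos hG
  have hS : (0:ℝ) < Nc + G * Nu := by positivity
  have hNcle : Nc ≤ G * (M - Nu) := by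
    rw [ge_iff_le, div_add' _ _ _ (ne_of_gt hG0), div_le_iff₀ hG0] at hM
    nlinarith
  have hM0 : (0:ℝ) < M := hNu.trans hMl
  have hS' : Nc + G * Nu ≠ 0 := ne_of_gt hS
  have hrw : (K - K * M / (Nc + G * Nu)) / (K * M / (Nc + G * Nu) + 1)
      = K * (Nc + G * Nu - M) / (K * M + (Nc + G * Nu)) := by
    have hD : K * M + (Nc + G * Nu) ≠ 0 := ne_of_gt (by nlinarith)
    have hD2 : K * M / (Nc + G * Nu) + 1 ≠ 0 := by
      have : (0:ℝ) < K * M / (Nc + G * Nu) + 1 := by positivity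
      exact ne_of_gt this
    field_simp
  rw [hrw, div_le_div_iff₀ (by nlinarith) (by nlinarith)]
  nlinarith [mul_pos hK (sub_pos.mpr hMl), sq_nonneg (M - Nu), sq_nonneg K,
    mul_nonneg (sub_nonneg.mpr hNcle) hK.le,
    mul_nonneg (mul_nonneg (sub_nonneg.mpr hNcle) hK.le) hK.le,
    mul_nonneg (mul_nonneg (sub_nonneg.mpr hNcle) hK.le) (sub_pos.mpr hMl).le]
end

section
/- If G ≥ 2 and M ≥ max((G/(G−1))·((K+1)/K)·N_u, N_c/G + N_u) with M ≤ N_c + N_u, then the Scheme 2 peak-rate upper bound K(N_u+N_c−M)/(K(M−N_u)+N_c) is simultaneously at most R_peak^(1) = (K − KM/(N_c+G·N_u))/(KM/(N_c+G·N_u)+1) and at most R_peak^(3) = KG(N_c+N_u−M)/(KM+G(N_c+N_u)). -/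
/-- Corollary: for `M ≥ max((G/(G−1))((K+1)/K) Nu, Nc/G + Nu)` (and `G ≥ 2`), the
Scheme 2 peak-rate upper bound is simultaneously at most `R_peak^(1)` and
`R_peak^(3)`. -/
theorem scheme2_best (K G Nc Nu M : ℝ)
    (hK : 0 < K) (hG : 2 ≤ G) (hGK : G ≤ K) (hNc : 0 < Nc) (hNu : 0 < Nu)
    (hMl : Nu < M) (hMu : M ≤ Nc + Nu)
    (hM : M ≥ max ((G / (G - 1)) * ((K + 1) / K) * Nu) (Nc / G + Nu)) :
    K * (Nu + Nc - M) / (K * (M - Nu) + Nc) ≤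
        (K - K * M / (Nc + G * Nu)) / (K * M / (Nc + G * Nu) + 1) ∧
      K * (Nu + Nc - M) / (K * (M - Nu) + Nc) ≤
        K * G * (Nc + Nu - M) / (K * M + G * (Nc + Nu)) := by
  have hG1 : (0:ℝ) < G - 1 := by linarith
  have h1 : M * (K * (G - 1)) ≥ G * (K + 1) * Nu := by
    have h := le_trans (le_max_left ((G / (G - 1)) * ((K + 1) / K) * Nu) (Nc / G + Nu)) hM
    have h' : (G / (G - 1)) * ((K + 1) / K) * Nu * ((G - 1) * K) ≤ M * ((G - 1) * K) := by
      exact mul_le_mul_of_nonneg_right h (by positivity)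
    have he : (G / (G - 1)) * ((K + 1) / K) * Nu * ((G - 1) * K) = G * (K + 1) * Nu := by
      field_simp
    rw [he] at h'
    nlinarith
  have h2 : G * M ≥ Nc + G * Nu := by
    have h := le_trans (le_max_right ((G / (G - 1)) * ((K + 1) / K) * Nu) (Nc / G + Nu)) hM
    have h' : Nc / G ≤ M - Nu := by linarith
    rw [div_le_iff₀ (by positivity : (0:ℝ) < G)] at h'
    nlinarith
  have hM0 : (0:ℝ) < M := lt_trans hNu hMl
  have hS : (0:ℝ) < Nc + G * Nu := by positivity
  have hD2 : (0:ℝ) < K * (M - Nu) + Nc := by nlinarith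
  constructor
  · have hp1 : (0:ℝ) < K * M / (Nc + G * Nu) + 1 := by positivity
    have hp2 : (0:ℝ) < K * M + (Nc + G * Nu) := by positivity
    have hr : (K - K * M / (Nc + G * Nu)) / (K * M / (Nc + G * Nu) + 1)
        = K * (Nc + G * Nu - M) / (K * M + (Nc + G * Nu)) := by
      have hS' := ne_of_gt hS
      field_simp
    rw [hr, div_le_div_iff₀ hD2 hp2]
    nlinarith [mul_nonneg (by positivity : (0:ℝ) ≤ K * Nu * (K + 1))
      (by linarith : (0:ℝ) ≤ G * M - (Nc + G * Nu))]
  · rw [div_le_div_iff₀ hD2 (by positivity)]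
    nlinarith [mul_nonneg (mul_nonneg hK.le (by linarith : (0:ℝ) ≤ Nc + Nu - M))
      (by linarith : (0:ℝ) ≤ M * (K * (G - 1)) - G * (K + 1) * Nu)]
end
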